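/- Let G = C_{2n+1} be a cycle of odd length 2n+1 ≥ 5 with edges e_1, …, e_{2n+1} in cyclic order. Then the element of ℤ^E × ℤ whose e_1-coordinate is 2, whose other edge-coordinates are all 1, and whose last coordinate is 3 lies in int(M_G), and m(G) = 3. (Equivalently, reg K[C_{2n+1}] = |E| − 2.) -/

import Mathlib

/-! Basic definitions for cut monoids of finite simple graphs. -/

open Classical in
/-- The cut vector of a vertex set `A`, as a function on `Sym2 V`:
value `1` on pairs with exactly one element in `A`, and `0` otherwise. -/
noncomputable def cutVec {V : Type} (A : Set V) : Sym2 V → ℤ :=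
  Sym2.lift ⟨fun v w => if ((v ∈ A) ↔ (w ∈ A)) then 0 else 1,
    fun v w => if_congr iff_comm rfl rfl⟩

variable {V : Type}

/-- The generators `(δ_A, 1)` of the cut monoid of `G`. -/
def cutGens (G : SimpleGraph V) : Set ((G.edgeSet → ℤ) × ℤ) :=
  {p | ∃ A : Set V, p = (fun e => cutVec A e.1, 1)}

/-- The cut monoid `M_G` of a graph `G`. -/
def cutMonoid (G : SimpleGraph V) : AddSubmonoid ((G.edgeSet → ℤ) × ℤ) :=
  AddSubmonoid.closure (cutGens G)

/-- The group `gp(M_G)` generated by the cut monoid. -/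
def cutGroup (G : SimpleGraph V) : AddSubgroup ((G.edgeSet → ℤ) × ℤ) :=
  AddSubgroup.closure (cutGens G)

/-- `M_G` is normal: every `x ∈ gp(M_G)` with `n • x ∈ M_G` for some `n ≥ 1` lies in `M_G`. -/
def CutNormal (G : SimpleGraph V) : Prop :=
  ∀ x ∈ cutGroup G, (∃ n : ℕ, 1 ≤ n ∧ n • x ∈ cutMonoid G) → x ∈ cutMonoid G

/-- `M_G` is seminormal: every `x ∈ gp(M_G)` with `2 • x ∈ M_G` and `3 • x ∈ M_G`
lies in `M_G`. -/
def CutSeminormal (G : SimpleGraph V) : Prop :=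
  ∀ x ∈ cutGroup G, 2 • x ∈ cutMonoid G → 3 • x ∈ cutMonoid G → x ∈ cutMonoid G

/-- Generators of the cone of `M_G`: nonnegative real multiples of the `(δ_A, 1)`. -/
noncomputable def cutConeGens (G : SimpleGraph V) : Set ((G.edgeSet → ℝ) × ℝ) :=
  {q | ∃ (c : ℝ) (A : Set V), 0 ≤ c ∧
    q = c • ((fun e => ((cutVec A e.1 : ℤ) : ℝ), (1 : ℝ)))}

/-- The cone `cone(M_G)`: all finite nonnegative real combinations of the `(δ_A, 1)`. -/
noncomputable def cutCone (G : SimpleGraph V) : Set ((G.edgeSet → ℝ) × ℝ) :=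
  (AddSubmonoid.closure (cutConeGens G) : Set ((G.edgeSet → ℝ) × ℝ))

/-- The canonical map from `ℤ^E × ℤ` to `ℝ^E × ℝ`. -/
noncomputable def toRealCut (G : SimpleGraph V) (p : (G.edgeSet → ℤ) × ℤ) :
    (G.edgeSet → ℝ) × ℝ :=
  (fun e => ((p.1 e : ℤ) : ℝ), ((p.2 : ℤ) : ℝ))

/-- `int(M_G)`: elements of `M_G` mapping into the topological interior of `cone(M_G)`. -/
noncomputable def cutInterior (G : SimpleGraph V) : Set ((G.edgeSet → ℤ) × ℤ) :=
  {p | p ∈ cutMonoid G ∧ toRealCut G p ∈ interior (cutCone G)}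

/-- The set of last coordinates `α ∈ ℕ` realized by elements of `int(M_G)`;
its least element is `m(G)`. -/
noncomputable def cutDegrees (G : SimpleGraph V) : Set ℕ :=
  {α | ∃ x : G.edgeSet → ℤ, ((x, (α : ℤ)) : (G.edgeSet → ℤ) × ℤ) ∈ cutInterior G}

/-- `H` is a minor of `G`: branch sets `B u` are nonempty, pairwise disjoint,
induce connected subgraphs, and edges of `H` are witnessed by edges of `G`. -/
def GraphMinor {W V : Type} (H : SimpleGraph W) (G : SimpleGraph V) : Prop :=
  ∃ B : W → Set V,
    (∀ u, (B u).Nonempty) ∧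
    (∀ u v, u ≠ v → Disjoint (B u) (B v)) ∧
    (∀ u, (G.induce (B u)).Connected) ∧
    (∀ u v, H.Adj u v → ∃ a ∈ B u, ∃ b ∈ B v, G.Adj a b)

/-- `G` is `K₅`-minor-free. -/
def K5Free (G : SimpleGraph V) : Prop :=
  ¬ GraphMinor (⊤ : SimpleGraph (Fin 5)) G

/-- `G` is bipartite: vertices split into two parts so every edge joins the parts. -/
def BipartiteG (G : SimpleGraph V) : Prop :=
  ∃ s : Set V, ∀ ⦃v w⦄, G.Adj v w → ((v ∈ s ∧ w ∉ s) ∨ (w ∈ s ∧ v ∉ s))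

/-- `G` has an induced cycle of length `n` (n ≥ 3): an induced-subgraph copy of the
cycle graph of length `n`. -/
def HasInducedCycleLen (G : SimpleGraph V) (n : ℕ) : Prop :=
  3 ≤ n ∧ Nonempty (SimpleGraph.cycleGraph n ↪g G)

/-- `G` contains a triangle. -/
def HasTriangle (G : SimpleGraph V) : Prop :=
  ∃ a b c, G.Adj a b ∧ G.Adj b c ∧ G.Adj a c

/-- `G` is chordal: every induced cycle is a triangle. -/
def ChordalG (G : SimpleGraph V) : Prop :=
  ∀ n, HasInducedCycleLen G n → n = 3

/-- `G` is bridgeless: every edge lies on some cycle. -/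
def BridgelessG (G : SimpleGraph V) : Prop :=
  ∀ e ∈ G.edgeSet, ∃ (v : V) (c : G.Walk v v), c.IsCycle ∧ e ∈ c.edges

/-- `G` is (isomorphic to) a cycle of length `n`. -/
def IsCycleOfLen (G : SimpleGraph V) (n : ℕ) : Prop :=
  3 ≤ n ∧ Nonempty (G ≃g SimpleGraph.cycleGraph n)

/-- `G` is a cycle. -/
def IsCycleGraph (G : SimpleGraph V) : Prop :=
  ∃ n, IsCycleOfLen G n

/-- `G` is a `0`-sum of `G1` and `G2`: copies of `G1`, `G2` cover `G`,
overlap in exactly one vertex, and every edge comes from `G1` or `G2`. -/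
def IsZeroSumDecomp {V1 V2 : Type} (G : SimpleGraph V) (G1 : SimpleGraph V1)
    (G2 : SimpleGraph V2) : Prop :=
  ∃ (f1 : V1 ↪ V) (f2 : V2 ↪ V),
    Set.range f1 ∪ Set.range f2 = Set.univ ∧
    (∃ v, Set.range f1 ∩ Set.range f2 = {v}) ∧
    (∀ a b, G.Adj a b ↔
      ((∃ x y, f1 x = a ∧ f1 y = b ∧ G1.Adj x y) ∨
       (∃ x y, f2 x = a ∧ f2 y = b ∧ G2.Adj x y)))

/-- `G` is a `1`-sum of `G1` and `G2` along a common edge. -/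
def IsOneSumDecomp {V1 V2 : Type} (G : SimpleGraph V) (G1 : SimpleGraph V1)
    (G2 : SimpleGraph V2) : Prop :=
  ∃ (f1 : V1 ↪ V) (f2 : V2 ↪ V) (v w : V),
    v ≠ w ∧
    Set.range f1 ∪ Set.range f2 = Set.univ ∧
    Set.range f1 ∩ Set.range f2 = {v, w} ∧
    (∃ x y, f1 x = v ∧ f1 y = w ∧ G1.Adj x y) ∧
    (∃ x y, f2 x = v ∧ f2 y = w ∧ G2.Adj x y) ∧
    (∀ a b, G.Adj a b ↔
      ((∃ x y, f1 x = a ∧ f1 y = b ∧ G1.Adj x y) ∨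
       (∃ x y, f2 x = a ∧ f2 y = b ∧ G2.Adj x y)))

/-- Ring graphs: obtained, up to adding isolated vertices, from finitely many
(finite) trees and cycles by iterated `0`-sums and `1`-sums. -/
inductive IsRingGraph : {V : Type} → SimpleGraph V → Prop
  | tree {V : Type} (G : SimpleGraph V) :
      Finite V → G.Connected → G.IsAcyclic → IsRingGraph G
  | cycle {V : Type} (G : SimpleGraph V) : IsCycleGraph G → IsRingGraph G
  | zeroSum {V1 V2 V : Type} {G1 : SimpleGraph V1} {G2 : SimpleGraph V2}
      {G : SimpleGraph V} :
      IsRingGraph G1 → IsRingGraph G2 → IsZeroSumDecomp G G1 G2 → IsRingGraph G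
  | oneSum {V1 V2 V : Type} {G1 : SimpleGraph V1} {G2 : SimpleGraph V2}
      {G : SimpleGraph V} :
      IsRingGraph G1 → IsRingGraph G2 → IsOneSumDecomp G G1 G2 → IsRingGraph G
  | addIsolated {V W : Type} {G : SimpleGraph V} {H : SimpleGraph W} (f : V ↪ W) :
      IsRingGraph G → (∀ a b, H.Adj a b ↔ ∃ x y, f x = a ∧ f y = b ∧ G.Adj x y) →
      IsRingGraph H

/-- An edge of an induced subgraph is an edge of the ambient graph. -/
lemma induce_edge_mem (G : SimpleGraph V) (s : Set V) (e : Sym2 s)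
    (he : e ∈ (G.induce s).edgeSet) : e.map Subtype.val ∈ G.edgeSet := by
  induction e using Sym2.ind with
  | _ a b =>
    rw [Sym2.map_pair_eq, SimpleGraph.mem_edgeSet]
    exact he

/-- Restriction of a vector indexed by the edges of `G` to the edges of the
subgraph of `G` induced on `s`. -/
noncomputable def restrictCut (G : SimpleGraph V) (s : Set V) (p : G.edgeSet → ℤ) :
    (G.induce s).edgeSet → ℤ :=
  fun e => p ⟨e.1.map Subtype.val, induce_edge_mem G s e.1 e.2⟩

/-!
Let `m = 2n + 1`, `e₀ = s(0, 1)` and `z = (0, 1)`. For `k ≠ 0` the vertex set `[1, k]` cuts exactly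
`e₀` and `e_k`, and, `m` being odd, an alternating vertex set cuts every edge except `e_k`; together
with the empty cut these give the target as a sum of three generators, for every `k ≠ 0`. Removing
any one of these generators from the target leaves a point of the cone, and they span the whole
space (summing the pair cuts separates `e₀` from the all-ones vector once `m ≠ 3`), so the target
is an interior point.

Conversely, `x_e` and `t - x_e` are nonnegative on the cone, so an interior point `(x, α)` has
`0 < x_e < α`. For `α ≤ 2` this forces `x = 1`, whose coordinate sum `2n + 1` is odd, while every
cut of a cycle has an even number of edges.
-/

open Set Submodule SimpleGraph

section ConeInterior

variable {F : Type*} [NormedAddCommGroup F] [NormedSpace ℝ F]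

theorem pos_of_mem_interior {C : Set F} {φ : F →ₗ[ℝ] ℝ} (hφ : φ ≠ 0) (hC : ∀ x ∈ C, 0 ≤ φ x)
    {p : F} (hp : p ∈ interior C) : 0 < φ p := by
  have : φ '' interior C ⊆ interior (Ici 0) :=
    interior_maximal (fun _ ⟨x, hx, hφx⟩ => hφx ▸ hC x (interior_subset hx))
      (φ.isOpenMap_of_finiteDimensional (LinearMap.surjective hφ) _ isOpen_interior)
  rw [interior_Ici] at this
  exact this ⟨p, hp, rfl⟩

variable [FiniteDimensional ℝ F]

theorem PointedCone.add_sum_smul_mem_interior {ι : Type*} [Fintype ι] {C : PointedCone ℝ F}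
    {g : ι → F} (hg : ∀ i, g i ∈ C) (hspan : span ℝ (range g) = ⊤) {q : F} (hq : q ∈ C)
    {c : ι → ℝ} (hc : ∀ i, 0 < c i) : q + ∑ i, c i • g i ∈ interior (C : Set F) := by
  set L := Fintype.linearCombination ℝ g
  have hL : IsOpenMap (fun d => q + L d) :=
    (isOpenMap_add_left q).comp
      (L.isOpenMap_of_finiteDimensional (by rwa [← LinearMap.range_eq_top,
        Fintype.range_linearCombination]))
  refine mem_interior.2 ⟨_, ?_, hL _ (isOpen_set_pi finite_univ fun _ _ => isOpen_Ioi),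
    ⟨c, fun i _ => hc i, rfl⟩⟩
  rintro _ ⟨d, hd, rfl⟩
  exact C.add_mem hq (C.sum_mem fun i _ => C.smul_mem (hd i trivial).le (hg i))

theorem PointedCone.mem_interior_of_span_eq_top {C : PointedCone ℝ F} {p : F}
    (h : span ℝ {s | s ∈ C ∧ p - s ∈ C} = ⊤) : p ∈ interior (C : Set F) := by
  obtain ⟨b, hbS, hb, hli⟩ := exists_linearIndependent ℝ {s | s ∈ C ∧ p - s ∈ C}
  rw [h] at hb
  have := hli.setFinite.fintype
  rcases isEmpty_or_nonempty b with hempty | hne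
  · have hC : (C : Set F) = univ := eq_univ_of_forall fun x => by
      have hx : x ∈ span ℝ b := hb ▸ mem_top
      rw [eq_empty_of_isEmpty b, span_empty, mem_bot] at hx
      exact hx ▸ C.zero_mem
    simp [hC]
  set N := (Fintype.card b : ℝ)
  have hN : 0 < N := Nat.cast_pos.2 Fintype.card_pos
  have hp : p = ∑ s : b, N⁻¹ • (p - s) + ∑ s : b, N⁻¹ • (s : F) := by
    rw [← Finset.sum_add_distrib]
    simp only [← smul_add, sub_add_cancel, Finset.sum_const, Finset.card_univ,
      ← Nat.cast_smul_eq_nsmul ℝ, smul_smul, mul_inv_cancel₀ hN.ne', one_smul, N]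
  rw [hp]
  refine C.add_sum_smul_mem_interior (fun s => (hbS s.2).1) (by rwa [Subtype.range_coe])
    (C.sum_mem fun s _ => C.smul_mem (inv_pos.2 hN).le (hbS s.2).2) fun _ => inv_pos.2 hN

end ConeInterior

theorem Submodule.eq_top_of_single_mem {E : Type*} [Fintype E] [DecidableEq E]
    {W : Submodule ℝ ((E → ℝ) × ℝ)} (hsingle : ∀ e, (Pi.single e 1, 0) ∈ W)
    (hz : ((0 : E → ℝ), (1 : ℝ)) ∈ W) : W = ⊤ := by
  refine eq_top_iff'.2 fun x => ?_
  have hx : x = ∑ e, x.1 e • (Pi.single e (1 : ℝ), (0 : ℝ)) + x.2 • ((0 : E → ℝ), (1 : ℝ)) := by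
    ext e <;> simp [Prod.fst_sum, Prod.snd_sum, Finset.sum_apply, Pi.single_apply]
  rw [hx]
  exact add_mem (sum_mem fun e _ => smul_mem _ _ (hsingle e)) (smul_mem _ _ hz)

section CutCone

variable (G : SimpleGraph V)

noncomputable def cutGen (A : Set V) : (G.edgeSet → ℤ) × ℤ := (fun e => cutVec A e.1, 1)

noncomputable def cutPoint (A : Set V) : (G.edgeSet → ℝ) × ℝ := (fun e => (cutVec A e.1 : ℝ), 1)

noncomputable def cutPointedCone : PointedCone ℝ ((G.edgeSet → ℝ) × ℝ) where
  toAddSubmonoid := AddSubmonoid.closure (cutConeGens G)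
  smul_mem' c x hx := by
    induction hx using AddSubmonoid.closure_induction with
    | mem x hx =>
      obtain ⟨d, A, hd, rfl⟩ := hx
      exact AddSubmonoid.subset_closure ⟨c * d, A, mul_nonneg c.2 hd, (mul_smul (c : ℝ) d _).symm⟩
    | zero => simp
    | add x y _ _ hx hy => simpa [smul_add] using add_mem hx hy

theorem coe_cutPointedCone : (cutPointedCone G : Set ((G.edgeSet → ℝ) × ℝ)) = cutCone G := rfl

variable {G}

theorem cutGen_mem_cutMonoid (A : Set V) : cutGen G A ∈ cutMonoid G :=
  AddSubmonoid.subset_closure ⟨A, rfl⟩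

theorem cutPoint_mem_cutPointedCone (A : Set V) : cutPoint G A ∈ cutPointedCone G :=
  AddSubmonoid.subset_closure ⟨1, A, zero_le_one, (one_smul ℝ _).symm⟩

theorem toRealCut_add (p q : (G.edgeSet → ℤ) × ℤ) :
    toRealCut G (p + q) = toRealCut G p + toRealCut G q := by
  ext <;> simp [toRealCut]

theorem toRealCut_cutGen (A : Set V) : toRealCut G (cutGen G A) = cutPoint G A := by
  ext <;> simp [toRealCut, cutGen, cutPoint]

open Classical in
theorem cutVec_mk (A : Set V) (a b : V) :
    cutVec A s(a, b) = if (a ∈ A ↔ b ∈ A) then 0 else 1 := rfl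

theorem cutVec_mem_Icc (A : Set V) (e : Sym2 V) : cutVec A e ∈ Icc 0 1 := by
  induction e using Sym2.ind with
  | _ a b => rw [cutVec_mk]; split_ifs <;> simp

theorem cutVec_empty (e : Sym2 V) : cutVec ∅ e = 0 := by
  induction e using Sym2.ind with
  | _ a b => simp [cutVec_mk]

theorem cutPoint_empty : cutPoint G ∅ = (0, 1) := by
  ext <;> simp [cutPoint, cutVec_empty]

theorem nonneg_of_mem_cutCone {φ : ((G.edgeSet → ℝ) × ℝ) →ₗ[ℝ] ℝ}
    (hφ : ∀ A, 0 ≤ φ (cutPoint G A)) {x} (hx : x ∈ cutCone G) : 0 ≤ φ x := by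
  induction hx using AddSubmonoid.closure_induction with
  | mem x hx =>
    obtain ⟨c, A, hc, rfl⟩ := hx
    rw [map_smul, smul_eq_mul]
    exact mul_nonneg hc (hφ A)
  | zero => simp
  | add x y _ _ hx hy => simpa using add_nonneg hx hy

theorem mem_Ioo_of_mem_interior_cutCone [Fintype G.edgeSet] {p : (G.edgeSet → ℝ) × ℝ}
    (hp : p ∈ interior (cutCone G)) (e : G.edgeSet) : p.1 e ∈ Ioo 0 p.2 := by
  classical
  let coord : ((G.edgeSet → ℝ) × ℝ) →ₗ[ℝ] ℝ := (LinearMap.proj e).comp (LinearMap.fst ℝ _ ℝ)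
  constructor
  · refine pos_of_mem_interior (C := cutCone G) (φ := coord) (fun h => ?_)
      (fun x hx => nonneg_of_mem_cutCone (fun A => ?_) hx) hp
    · simpa [coord] using LinearMap.congr_fun h (Pi.single e 1, 0)
    · simpa [coord, cutPoint] using (cutVec_mem_Icc A e.1).1
  · refine sub_pos.1 (pos_of_mem_interior (C := cutCone G) (φ := LinearMap.snd ℝ _ ℝ - coord)
      (fun h => ?_) (fun x hx => nonneg_of_mem_cutCone (fun A => ?_) hx) hp)
    · simpa [coord] using LinearMap.congr_fun h (0, 1)
    · simpa [coord, cutPoint] using (Int.cast_le (R := ℝ)).2 (cutVec_mem_Icc A e.1).2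

theorem mem_Ioo_of_mem_cutInterior [Fintype G.edgeSet] {x : G.edgeSet → ℤ} {α : ℤ}
    (h : (x, α) ∈ cutInterior G) (e : G.edgeSet) : x e ∈ Ioo 0 α := by
  simpa [toRealCut] using mem_Ioo_of_mem_interior_cutCone h.2 e

end CutCone

section Cycle

variable {m : ℕ} [NeZero m]

theorem Fin.val_add_one_cases (hm : 2 ≤ m) (i : Fin m) :
    ((i + 1 : Fin m) : ℕ) = i + 1 ∨ ((i : ℕ) + 1 = m ∧ ((i + 1 : Fin m) : ℕ) = 0) := by
  rw [Fin.val_add_eq_ite, Fin.val_one', Nat.mod_eq_of_lt hm]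
  split_ifs <;> omega

theorem Fin.val_one_of_two_le (hm : 2 ≤ m) : ((1 : Fin m) : ℕ) = 1 := by
  rw [Fin.val_one', Nat.mod_eq_of_lt hm]

theorem Fin.one_ne_zero_of_two_le (hm : 2 ≤ m) : (1 : Fin m) ≠ 0 := by
  rw [Ne, Fin.ext_iff, Fin.val_one_of_two_le hm, Fin.val_zero]
  exact one_ne_zero

def alternatingExcept (k : Fin m) : Set (Fin m) :=
  {v | Even (if v ≤ k then (v : ℕ) else v + 1)}

def cycleTarget (m : ℕ) [NeZero m] : ((cycleGraph m).edgeSet → ℤ) × ℤ :=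
  (fun e => if e.1 = s(0, 1) then 2 else 1, 3)

theorem cutVec_Icc_one (hm : 2 ≤ m) {k : Fin m} (hk : k ≠ 0) (i : Fin m) :
    cutVec (Icc 1 k) s(i, i + 1) = (if i = 0 then 1 else 0) + (if i = k then 1 else 0) := by
  have := Fin.val_add_one_cases hm i
  have := Fin.val_one_of_two_le hm
  rw [Ne, Fin.ext_iff, Fin.val_zero] at hk
  simp only [cutVec_mk, mem_Icc, Fin.le_iff_val_le_val, Fin.ext_iff, Fin.val_zero]
  split_ifs <;> omega

theorem cutVec_alternatingExcept (hm : 2 ≤ m) (hodd : Odd m) (k i : Fin m) :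
    cutVec (alternatingExcept k) s(i, i + 1) = if i = k then 0 else 1 := by
  obtain ⟨r, hr⟩ := hodd
  have := Fin.val_add_one_cases hm i
  simp only [cutVec_mk, alternatingExcept, mem_ofPred_eq, Fin.le_iff_val_le_val, Fin.ext_iff,
    Nat.even_iff]
  split_ifs <;> omega

variable (hm : 3 ≤ m)
include hm

theorem cycleGraph_adj_add_one (i : Fin m) : (cycleGraph m).Adj i (i + 1) := by
  rw [cycleGraph_adj', add_sub_cancel_left, Fin.val_one_of_two_le (by omega)]
  exact Or.inr rfl

def cycleEdge (i : Fin m) : (cycleGraph m).edgeSet := ⟨s(i, i + 1), cycleGraph_adj_add_one hm i⟩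

theorem cycleEdge_bijective : Function.Bijective (cycleEdge hm) := by
  refine ⟨fun i j h => ?_, fun ⟨e, he⟩ => ?_⟩
  · have := Fin.val_add_one_cases (by omega) i
    have := Fin.val_add_one_cases (by omega) j
    simp only [cycleEdge, Subtype.ext_iff, Sym2.eq_iff, Fin.ext_iff] at h
    omega
  · induction e using Sym2.ind with
    | _ u v =>
      rw [mem_edgeSet, cycleGraph_adj'] at he
      have h1 : ∀ a b : Fin m, (a - b : Fin m).val = 1 → a = b + 1 := fun a b h => by
        rw [← sub_eq_iff_eq_add', Fin.ext_iff, h, Fin.val_one_of_two_le (by omega)]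
      rcases he with h | h
      · exact ⟨v, Subtype.ext <| by simp [cycleEdge, h1 u v h, Sym2.eq_swap]⟩
      · exact ⟨u, Subtype.ext <| by simp [cycleEdge, h1 v u h]⟩

noncomputable def cycleEdgeEquiv : Fin m ≃ (cycleGraph m).edgeSet :=
  Equiv.ofBijective _ (cycleEdge_bijective hm)

theorem cycleEdge_eq_iff (i : Fin m) : (cycleEdge hm i).1 = s(0, 1) ↔ i = 0 := by
  rw [show s((0 : Fin m), 1) = (cycleEdge hm 0).1 by simp [cycleEdge], ← Subtype.ext_iff,
    (cycleEdge_bijective hm).1.eq_iff]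

theorem cutGen_Icc_add_alternatingExcept (hodd : Odd m) {k : Fin m} (hk : k ≠ 0) :
    cutGen _ (Icc 1 k) + cutGen _ (alternatingExcept k) + cutGen _ ∅ = cycleTarget m := by
  refine Prod.ext (funext fun e => ?_) (by norm_num [cutGen, cycleTarget])
  obtain ⟨i, rfl⟩ := (cycleEdge_bijective hm).2 e
  have h2 : 2 ≤ m := by omega
  simp only [Prod.fst_add, Pi.add_apply, cutGen, cycleTarget, cycleEdge_eq_iff, cutVec_empty]
  simp only [cycleEdge, cutVec_Icc_one h2 hk, cutVec_alternatingExcept h2 hodd]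
  split_ifs <;> omega

theorem toRealCut_cycleTarget (hodd : Odd m) {k : Fin m} (hk : k ≠ 0) :
    toRealCut _ (cycleTarget m) =
      cutPoint _ (Icc 1 k) + cutPoint _ (alternatingExcept k) + cutPoint _ ∅ := by
  simp only [← cutGen_Icc_add_alternatingExcept hm hodd hk, toRealCut_add, toRealCut_cutGen]

theorem even_sum_cutVec (A : Set (Fin m)) :
    Even (∑ e : (cycleGraph m).edgeSet, cutVec A e.1) := by
  classical
  let f : Fin m → ℤ := fun v => if v ∈ A then 1 else 0
  have hcut (i : Fin m) : cutVec A s(i, i + 1) = f i + f (i + 1) - 2 * (f i * f (i + 1)) := by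
    by_cases h1 : i ∈ A <;> by_cases h2 : i + 1 ∈ A <;> simp [cutVec_mk, f, h1, h2]
  have hshift : ∑ i, f (i + 1) = ∑ i, f i := Equiv.sum_comp (Equiv.addRight (1 : Fin m)) f
  rw [← (cycleEdgeEquiv hm).sum_comp]
  simp only [cycleEdgeEquiv, Equiv.ofBijective_apply, cycleEdge, hcut, Finset.sum_sub_distrib,
    Finset.sum_add_distrib, hshift, ← Finset.mul_sum]
  exact ⟨∑ i, f i - ∑ i, f i * f (i + 1), by ring⟩

theorem even_sum_of_mem_cutMonoid {p : ((cycleGraph m).edgeSet → ℤ) × ℤ}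
    (hp : p ∈ cutMonoid (cycleGraph m)) : Even (∑ e, p.1 e) := by
  induction hp using AddSubmonoid.closure_induction with
  | mem x hx =>
    obtain ⟨A, rfl⟩ := hx
    exact even_sum_cutVec hm A
  | zero => simp
  | add x y _ _ hx hy => simpa [Finset.sum_add_distrib] using hx.add hy

noncomputable def edgeVec (i : Fin m) : ((cycleGraph m).edgeSet → ℝ) × ℝ :=
  (Pi.single (cycleEdge hm i) 1, 0)

theorem ext_cycleEdge {p q : ((cycleGraph m).edgeSet → ℝ) × ℝ}
    (h1 : ∀ i, p.1 (cycleEdge hm i) = q.1 (cycleEdge hm i)) (h2 : p.2 = q.2) : p = q := by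
  refine Prod.ext (funext fun e => ?_) h2
  obtain ⟨i, rfl⟩ := (cycleEdge_bijective hm).2 e
  exact h1 i

theorem edgeVec_apply (i j : Fin m) :
    (edgeVec hm i).1 (cycleEdge hm j) = if j = i then 1 else 0 := by
  simp [edgeVec, Pi.single_apply, (cycleEdge_bijective hm).1.eq_iff]

theorem cutPoint_apply_cycleEdge (A : Set (Fin m)) (j : Fin m) :
    (cutPoint _ A).1 (cycleEdge hm j) = cutVec A s(j, j + 1) := rfl

theorem sum_edgeVec : ∑ i, edgeVec hm i = (1, 0) := by
  refine ext_cycleEdge hm (fun j => ?_) (by simp [edgeVec, Prod.snd_sum])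
  simp [Prod.fst_sum, Finset.sum_apply, edgeVec_apply]

theorem cutPoint_Icc_one {k : Fin m} (hk : k ≠ 0) :
    cutPoint _ (Icc 1 k) = edgeVec hm 0 + edgeVec hm k + (0, 1) := by
  refine ext_cycleEdge hm (fun j => ?_) (by simp [edgeVec, cutPoint])
  simp only [cutPoint_apply_cycleEdge, cutVec_Icc_one (by omega) hk, Prod.fst_add, Pi.add_apply,
    edgeVec_apply]
  split_ifs <;> norm_num

theorem cutPoint_alternatingExcept (hodd : Odd m) (k : Fin m) :
    cutPoint _ (alternatingExcept k) = (1, 1) - edgeVec hm k := by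
  refine ext_cycleEdge hm (fun j => ?_) (by simp [edgeVec, cutPoint])
  simp only [cutPoint_apply_cycleEdge, cutVec_alternatingExcept (by omega) hodd, Prod.fst_sub,
    Pi.sub_apply, edgeVec_apply]
  split_ifs <;> simp

end Cycle

theorem span_below_cycleTarget_eq_top {m : ℕ} [NeZero m] (hm : 5 ≤ m) (hodd : Odd m) :
    span ℝ {s | s ∈ cutPointedCone (cycleGraph m) ∧
      toRealCut _ (cycleTarget m) - s ∈ cutPointedCone (cycleGraph m)} = ⊤ := by
  classical
  have hm3 : 3 ≤ m := by omega
  set W := span ℝ {s | s ∈ cutPointedCone (cycleGraph m) ∧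
      toRealCut _ (cycleTarget m) - s ∈ cutPointedCone (cycleGraph m)}
  have h10 : (1 : Fin m) ≠ 0 := Fin.one_ne_zero_of_two_le (by omega)
  have hW (A B D : Set (Fin m)) (h : toRealCut _ (cycleTarget m) =
      cutPoint _ A + cutPoint _ B + cutPoint _ D) : cutPoint _ A ∈ W :=
    subset_span ⟨cutPoint_mem_cutPointedCone A, by
      rw [h, add_assoc, add_sub_cancel_left]
      exact add_mem (cutPoint_mem_cutPointedCone B) (cutPoint_mem_cutPointedCone D)⟩
  set e := edgeVec hm3
  have hz : ((0 : (cycleGraph m).edgeSet → ℝ), (1 : ℝ)) ∈ W := by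
    rw [← cutPoint_empty]
    exact hW ∅ (Icc 1 1) (alternatingExcept 1) (by rw [toRealCut_cycleTarget hm3 hodd h10]; abel)
  have hP (k : Fin m) (hk : k ≠ 0) : e 0 + e k + (0, 1) ∈ W := by
    rw [← cutPoint_Icc_one hm3 hk]
    exact hW _ _ _ (toRealCut_cycleTarget hm3 hodd hk)
  have hC : (1, 1) - e 1 ∈ W := by
    rw [← cutPoint_alternatingExcept hm3 hodd]
    exact hW (alternatingExcept 1) ∅ (Icc 1 1) (by rw [toRealCut_cycleTarget hm3 hodd h10]; abel)
  -- Only a sum over all the pair cuts `{e 0, e k}` separates `e 0` from the all-ones vector.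
  have hsep : ((m : ℝ) - 3) • e 0 =
      ∑ k ∈ Finset.univ.erase 0, (e 0 + e k + (0, 1)) - (e 0 + e 1 + (0, 1) + ((1, 1) - e 1))
        - ((m : ℝ) - 3) • (0, 1) := by
    have hone : ((1 : (cycleGraph m).edgeSet → ℝ), (1 : ℝ)) =
        e 0 + ∑ k ∈ Finset.univ.erase 0, e k + (0, 1) := by
      rw [Finset.add_sum_erase _ _ (Finset.mem_univ 0), sum_edgeVec, Prod.mk_add_mk]
      simp
    have hcard : ((Finset.univ.erase (0 : Fin m)).card : ℝ) = m - 1 := by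
      rw [Finset.card_erase_of_mem (Finset.mem_univ 0), Finset.card_univ, Fintype.card_fin,
        Nat.cast_sub (by omega), Nat.cast_one]
    simp only [Finset.sum_add_distrib, Finset.sum_const, ← Nat.cast_smul_eq_nsmul ℝ, hcard, hone]
    module
  have he0 : e 0 ∈ W := by
    have hsum : ∑ k ∈ Finset.univ.erase 0, (e 0 + e k + (0, 1)) ∈ W :=
      sum_mem fun k hk => hP k (Finset.ne_of_mem_erase hk)
    have h := W.smul_mem ((m : ℝ) - 3)⁻¹ (show ((m : ℝ) - 3) • e 0 ∈ W by
      rw [hsep]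
      exact sub_mem (sub_mem hsum (add_mem (hP 1 h10) hC)) (W.smul_mem _ hz))
    have hm3' : (m : ℝ) - 3 ≠ 0 := by
      rw [sub_ne_zero]
      exact_mod_cast (by omega : m ≠ 3)
    rwa [smul_smul, inv_mul_cancel₀ hm3', one_smul] at h
  have he (k : Fin m) : e k ∈ W := by
    rcases eq_or_ne k 0 with rfl | hk
    · exact he0
    · have h := sub_mem (sub_mem (hP k hk) he0) hz
      rwa [show e 0 + e k + (0, 1) - e 0 - (0, 1) = e k by abel] at h
  refine Submodule.eq_top_of_single_mem (fun x => ?_) hz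
  obtain ⟨k, rfl⟩ := (cycleEdge_bijective hm3).2 x
  exact he k

theorem cycleTarget_mem_cutInterior {m : ℕ} [NeZero m] (hm : 5 ≤ m) (hodd : Odd m) :
    cycleTarget m ∈ cutInterior (cycleGraph m) := by
  refine ⟨?_, ?_⟩
  · rw [← cutGen_Icc_add_alternatingExcept (by omega) hodd (Fin.one_ne_zero_of_two_le (by omega))]
    exact add_mem (add_mem (cutGen_mem_cutMonoid _) (cutGen_mem_cutMonoid _))
      (cutGen_mem_cutMonoid _)
  · rw [← coe_cutPointedCone]
    exact PointedCone.mem_interior_of_span_eq_top (span_below_cycleTarget_eq_top hm hodd)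

theorem three_le_of_mem_cutDegrees {m : ℕ} [NeZero m] (hm : 3 ≤ m) (hodd : Odd m) {α : ℕ}
    (hα : α ∈ cutDegrees (cycleGraph m)) : 3 ≤ α := by
  obtain ⟨x, hx⟩ := hα
  by_contra! hα3
  have hx1 (e : (cycleGraph m).edgeSet) : x e = 1 := by
    obtain ⟨h0, h1⟩ := mem_Ioo_of_mem_cutInterior hx e
    omega
  have heven := even_sum_of_mem_cutMonoid hm hx.1
  simp only [hx1, Finset.sum_const, Finset.card_univ, ← Fintype.card_congr (cycleEdgeEquiv hm),
    Fintype.card_fin, nsmul_eq_mul, mul_one, Int.even_coe_nat] at heven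
  exact Nat.not_even_iff_odd.2 hodd heven

/-- For the odd cycle `C_{2n+1}` (`2n+1 ≥ 5`), the element with
`e₁`-coordinate `2`, all other edge-coordinates `1` and last coordinate `3` lies in
`int(M_G)`, and `m(C_{2n+1}) = 3`. -/
theorem odd_cycle_m (n : ℕ) (hn : 2 ≤ n) :
    (((fun e => if e.1 = s((⟨0, by omega⟩ : Fin (2 * n + 1)),
          (⟨1, by omega⟩ : Fin (2 * n + 1))) then (2 : ℤ) else 1, (3 : ℤ)) :
        ((SimpleGraph.cycleGraph (2 * n + 1)).edgeSet → ℤ) × ℤ) ∈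
      cutInterior (SimpleGraph.cycleGraph (2 * n + 1))) ∧
    IsLeast (cutDegrees (SimpleGraph.cycleGraph (2 * n + 1))) 3 := by
  have hm : 5 ≤ 2 * n + 1 := by omega
  have hodd : Odd (2 * n + 1) := odd_two_mul_add_one n
  have hedge : s((⟨0, by omega⟩ : Fin (2 * n + 1)), ⟨1, by omega⟩) = s(0, 1) := by
    rw [Fin.mk_zero', show (⟨1, _⟩ : Fin (2 * n + 1)) = 1 from
      Fin.ext (Fin.val_one_of_two_le (by omega)).symm]
  have htarget := cycleTarget_mem_cutInterior hm hodd
  simp only [hedge]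
  exact ⟨htarget, ⟨_, htarget⟩, fun α hα => three_le_of_mem_cutDegrees (by omega) hodd hα⟩
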